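/- Define F : ℂ³ → ℂ by F(x,y,z) = (x² − z·y²)·conj(y) (the mixed function f·ḡ with f = x² − z·y² and g = y, Sabbah's example). Let z₀ ∈ ℂ with z₀ ≠ 0. Then for every sequence of points pₙ → (0, 0, z₀) and every sequence of unit vectors wₙ ∈ ℂ³ orthogonal (with respect to the real inner product) to ker(fderiv ℝ F pₙ) that converges to some w ∈ ℂ³, the third complex component of w is zero. Consequently every limit of tangent spaces to the fibres of F at points approaching (0,0,z₀) contains the real tangent space of the z-axis, i.e. the z-axis minus the origin is a single Thom (a_F)-regular stratum of F, even though the holomorphic map (f,g) = (x² − z·y², y) is not Thom regular along the z-axis. (Claim of Example 3.4: NT_{f·ḡ} = {0} while NT_{(f,g)} is the z-axis.) -/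

import Mathlib

open Complex Filter Function Metric

noncomputable section

/-- `ℂ³` with its Euclidean (Hermitian) norm. -/
abbrev C3 := EuclideanSpace ℂ (Fin 3)

/-- The point `(a, b, c) ∈ ℂ³`. -/
def mk3 (a b c : ℂ) : C3 := WithLp.toLp 2 ![a, b, c]

/-- Real inner product `⟨v,w⟩_ℝ = Re Σ_k v_k·conj(w_k)` on `ℂ³ ≅ ℝ⁶`. -/
def realInnerC (v w : C3) : ℝ := (∑ k : Fin 3, v k * (starRingEnd ℂ) (w k)).re

/-!
A unit vector `w` orthogonal to `ker dF_p`, for `F = f·ḡ`, lies in `(ker dF_p)ᗮ = range (dF_p)†`,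
so `w = μ g(p) ∇f(p) + μ̄ f(p) ∇g(p)` for some `μ ∈ ℂ`. For `f = x² − z y²` and `g = y` its
coordinates are `2μy x̄`, `−2μy z̄ ȳ + μ̄ f` and `−μy ȳ²`. Since the first two have modulus at most
`1`, `|μy| |x| ≤ 1/2` and `|μy| |y| |z| ≤ 1 + |μ| |x|²`, whence `|w₂| |z| ≤ |y| + |x|/2`, which
tends to `0` as `p → (0, 0, z₀)` while `|z| → |z₀| ≠ 0`.
-/

open InnerProductSpace
open scoped Gradient ComplexConjugate

section
variable {𝕜 E F : Type*} [RCLike 𝕜] [NormedAddCommGroup E] [InnerProductSpace 𝕜 E]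
  [NormedAddCommGroup F] [InnerProductSpace 𝕜 F] [CompleteSpace E] [CompleteSpace F]

theorem ContinuousLinearMap.orthogonal_ker_eq_range_adjoint [FiniteDimensional 𝕜 F]
    (T : E →L[𝕜] F) : T.kerᗮ = T.adjoint.range := by
  rw [T.orthogonal_ker]
  exact (Submodule.closed_of_finiteDimensional _).submodule_topologicalClosure_eq

end

section
variable {E : Type*} [NormedAddCommGroup E] [InnerProductSpace ℂ E] [CompleteSpace E]
  {f g : E → ℂ} {p v v' : E}

theorem HasGradientAt.fderiv_mul_conj_apply (hf : HasGradientAt f v p)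
    (hg : HasGradientAt g v' p) (u : E) :
    fderiv ℝ (fun q => f q * conj (g q)) p u
      = conj (g p) * inner ℂ v u + f p * conj (inner ℂ v' u) := by
  have hg' : HasFDerivAt (fun q => conj (g q)) _ p :=
    conjCLE.hasFDerivAt.comp p (hg.hasFDerivAt.restrictScalars ℝ)
  have hF : HasFDerivAt (fun q => f q * conj (g q)) _ p :=
    (hf.hasFDerivAt.restrictScalars ℝ).mul hg'
  rw [hF.fderiv]
  simp only [add_apply, smul_apply, ContinuousLinearMap.comp_apply,
    ContinuousLinearMap.coe_restrictScalars', toDual_apply_apply, ContinuousLinearEquiv.coe_coe,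
    ContinuousAlgEquiv.coeCLE_apply, conjCAE_apply, inner_conj_symm, smul_eq_mul]
  ring

theorem HasGradientAt.exists_eq_smul_add_smul_of_orthogonal_ker_fderiv_mul_conj {w : E}
    (hf : HasGradientAt f v p) (hg : HasGradientAt g v' p)
    (hw : ∀ u, fderiv ℝ (fun q => f q * conj (g q)) p u = 0 → re (inner ℂ w u) = 0) :
    ∃ μ : ℂ, w = (μ * g p) • v + (conj μ * f p) • v' := by
  let := InnerProductSpace.complexToReal (G := E)
  set T := fderiv ℝ (fun q => f q * conj (g q)) p
  have hwT : w ∈ T.kerᗮ := (Submodule.mem_orthogonal' _ _).mpr hw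
  rw [T.orthogonal_ker_eq_range_adjoint] at hwT
  obtain ⟨μ, hμ⟩ := LinearMap.mem_range.mp hwT
  refine ⟨μ, ext_inner_left ℝ fun u => ?_⟩
  rw [← hμ, ContinuousLinearMap.coe_coe, ContinuousLinearMap.adjoint_inner_right,
    hf.fderiv_mul_conj_apply hg]
  simp only [real_inner_eq_re_inner ℂ, inner_add_right, inner_smul_right]
  rw [RCLike.inner_apply, ← inner_conj_symm u v, ← inner_conj_symm u v', RCLike.re_to_complex,
    RCLike.re_to_complex]
  simp only [map_add, map_mul, conj_conj, add_re, add_im, mul_re, mul_im, conj_re, conj_im]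
  ring

end

theorem EuclideanSpace.hasGradientAt_apply {𝕜 ι : Type*} [RCLike 𝕜] [Fintype ι] [DecidableEq ι]
    (i : ι) (p : EuclideanSpace 𝕜 ι) :
    HasGradientAt (fun q : EuclideanSpace 𝕜 ι => q i) (EuclideanSpace.single i 1) p := by
  refine (EuclideanSpace.proj i : EuclideanSpace 𝕜 ι →L[𝕜] 𝕜).hasFDerivAt.congr_fderiv ?_
  ext u
  simp [EuclideanSpace.inner_single_left]

theorem inner_mk3 (a b c : ℂ) (u : C3) :
    inner ℂ (mk3 a b c) u = conj a * u 0 + conj b * u 1 + conj c * u 2 := by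
  simp [mk3, PiLp.inner_apply, Fin.sum_univ_three, mul_comm]

theorem realInnerC_eq_re_inner (v w : C3) : realInnerC v w = re (inner ℂ v w) := by
  rw [realInnerC, ← conj_re, map_sum]
  simp [PiLp.inner_apply, mul_comm]

theorem hasGradientAt_sabbah (p : C3) :
    HasGradientAt (fun q : C3 => q 0 ^ 2 - q 2 * q 1 ^ 2)
      (mk3 (2 * conj (p 0)) (-(2 * conj (p 2) * conj (p 1))) (-conj (p 1) ^ 2)) p := by
  have h i := (EuclideanSpace.hasGradientAt_apply (𝕜 := ℂ) i p).hasFDerivAt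
  refine (((h 0).pow 2).sub ((h 2).mul ((h 1).pow 2))).congr_fderiv ?_
  ext u
  simp only [sub_apply, add_apply, smul_apply, toDual_apply_apply,
    EuclideanSpace.inner_single_left, inner_mk3, map_one, one_mul, smul_eq_mul, map_mul, map_neg,
    map_pow, conj_conj, map_ofNat]
  ring

theorem sabbah_normal_coord_bound (x y z μ : ℂ) (h0 : ‖μ * y * (2 * conj x)‖ ≤ 1)
    (h1 : ‖μ * y * -(2 * conj z * conj y) + conj μ * (x ^ 2 - z * y ^ 2)‖ ≤ 1) :
    ‖μ * y * -conj y ^ 2‖ * ‖z‖ ≤ ‖y‖ + ‖x‖ / 2 := by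
  have hx : 2 * (‖μ‖ * ‖y‖) * ‖x‖ ≤ 1 := by simpa [mul_assoc, mul_left_comm] using h0
  have hf : ‖x ^ 2 - z * y ^ 2‖ ≤ ‖x‖ ^ 2 + ‖z‖ * ‖y‖ ^ 2 :=
    (norm_sub_le _ _).trans_eq (by simp)
  have hz : 2 * (‖μ‖ * ‖y‖) * ‖z‖ * ‖y‖ ≤ 1 + ‖μ‖ * (‖x‖ ^ 2 + ‖z‖ * ‖y‖ ^ 2) :=
    calc 2 * (‖μ‖ * ‖y‖) * ‖z‖ * ‖y‖ = ‖μ * y * -(2 * conj z * conj y)‖ := by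
          simp only [mul_neg, norm_neg, norm_mul, norm_ofNat, RCLike.norm_conj]; ring
      _ ≤ ‖μ * y * -(2 * conj z * conj y) + conj μ * (x ^ 2 - z * y ^ 2)‖
          + ‖conj μ * (x ^ 2 - z * y ^ 2)‖ := norm_le_add_norm_add _ _
      _ ≤ 1 + ‖μ‖ * (‖x‖ ^ 2 + ‖z‖ * ‖y‖ ^ 2) := by
          rw [norm_mul, norm_conj]; gcongr
  rw [norm_mul, norm_mul, norm_neg, norm_pow, norm_conj]
  nlinarith [mul_le_mul_of_nonneg_right hx (norm_nonneg x), norm_nonneg y,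
    mul_le_mul_of_nonneg_left hz (norm_nonneg y), norm_nonneg μ, norm_nonneg z]

theorem sabbah_normal_bound (p w : C3) (hw1 : ‖w‖ = 1)
    (hw : ∀ u, fderiv ℝ (fun q : C3 => (q 0 ^ 2 - q 2 * q 1 ^ 2) * conj (q 1)) p u = 0 →
      re (inner ℂ w u) = 0) :
    ‖w 2‖ * ‖p 2‖ ≤ ‖p 1‖ + ‖p 0‖ / 2 := by
  obtain ⟨μ, rfl⟩ :=
    (hasGradientAt_sabbah p).exists_eq_smul_add_smul_of_orthogonal_ker_fderiv_mul_conj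
      (EuclideanSpace.hasGradientAt_apply 1 p) hw
  have hcoord (i : Fin 3) := (PiLp.norm_apply_le _ i).trans hw1.le
  simpa [mk3] using sabbah_normal_coord_bound (p 0) (p 1) (p 2) μ
    (by simpa [mk3] using hcoord 0) (by simpa [mk3] using hcoord 1)

/-- **Claim of Example 3.4 (Sabbah's example).**  For
`F(x,y,z) = (x² − z·y²)·conj(y)`, at every point `(0, 0, z₀)` with `z₀ ≠ 0` of the
`z`-axis, all limits of unit normal vectors to the fibres of `F` (unit vectors orthogonal,
for the real inner product, to `ker (fderiv ℝ F pₘ)` along sequences `pₘ → (0,0,z₀)`) have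
vanishing third complex component.  Hence every limit of tangent spaces to fibres of `F`
contains the real tangent space of the `z`-axis: the `z`-axis minus the origin is a single
Thom `(a_F)`-regular stratum, although the holomorphic map `(x² − z·y², y)` is not Thom
regular along the `z`-axis. -/
theorem sabbah_example_fgbar_thom_regular_along_z_axis
    (F : C3 → ℂ) (hF : ∀ q : C3, F q = ((q 0) ^ 2 - q 2 * (q 1) ^ 2) * starRingEnd ℂ (q 1))
    (z₀ : ℂ) (hz₀ : z₀ ≠ 0)
    (ps ws : ℕ → C3) (w : C3)
    (hps : Tendsto ps atTop (nhds (mk3 0 0 z₀)))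
    (hws : ∀ m : ℕ, ‖ws m‖ = 1 ∧
      ∀ u : C3, fderiv ℝ F (ps m) u = 0 → realInnerC (ws m) u = 0)
    (hlim : Tendsto ws atTop (nhds w)) :
    w 2 = 0 := by
  obtain rfl : F = fun q => (q 0 ^ 2 - q 2 * q 1 ^ 2) * conj (q 1) := funext hF
  have hbound m : ‖ws m 2‖ * ‖ps m 2‖ ≤ ‖ps m 1‖ + ‖ps m 0‖ / 2 :=
    sabbah_normal_bound (ps m) (ws m) (hws m).1 fun u hu =>
      realInnerC_eq_re_inner (ws m) u ▸ (hws m).2 u hu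
  have hcoord {u : ℕ → C3} {v : C3} (h : Tendsto u atTop (nhds v)) (i : Fin 3) :
      Tendsto (fun m => ‖u m i‖) atTop (nhds ‖v i‖) :=
    (((PiLp.continuous_apply 2 _ i).tendsto v).comp h).norm
  have hle := le_of_tendsto_of_tendsto' ((hcoord hlim 2).mul (hcoord hps 2))
    ((hcoord hps 1).add ((hcoord hps 0).div_const 2)) hbound
  simp only [mk3, Matrix.cons_val, norm_zero, zero_div, add_zero] at hle
  exact norm_eq_zero.mp <|
    le_antisymm (nonpos_of_mul_nonpos_left hle (norm_pos_iff.mpr hz₀)) (norm_nonneg _)
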